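/- arXiv:1912.11617 — 2 statements merged into one kernel-verified Lean document; each statement's English description precedes it below -/
import Mathlib

section
/- Let f be a primitive polynomial of degree k over F₂, let ℓ ≥ 1, and let s be a nonzero binary sequence whose minimal zero polynomial is f^ℓ. Then the least period of s equals (2^k − 1) · 2^i, where i = ⌈log₂ ℓ⌉. -/
open Polynomial

noncomputable def polyApp (f : Polynomial (ZMod 2)) (s : ℕ → ZMod 2) : ℕ → ZMod 2 :=
  fun i => f.sum fun j c => c * s (i + j)

def HasPeriodDvd (s : ℕ → ZMod 2) (N : ℕ) : Prop := ∀ i, s (i + N) = s i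

def IsLeastPeriod (s : ℕ → ZMod 2) (e : ℕ) : Prop :=
  0 < e ∧ HasPeriodDvd s e ∧ ∀ m, 0 < m → HasPeriodDvd s m → e ≤ m

def IsMinZeroPoly (g : Polynomial (ZMod 2)) (s : ℕ → ZMod 2) : Prop :=
  g ≠ 0 ∧ polyApp g s = 0 ∧
    ∀ h : Polynomial (ZMod 2), h ≠ 0 → polyApp h s = 0 → g.natDegree ≤ h.natDegree

def IsExponent (f : Polynomial (ZMod 2)) (e : ℕ) : Prop :=
  0 < e ∧ f ∣ X ^ e - 1 ∧ ∀ m, 0 < m → f ∣ X ^ m - 1 → e ≤ m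

def IsPrimitivePoly (f : Polynomial (ZMod 2)) (k : ℕ) : Prop :=
  Irreducible f ∧ f.natDegree = k ∧ f.coeff 0 ≠ 0 ∧ IsExponent f (2 ^ k - 1)

/-! The periods of `s` are the `N` with `f ^ ℓ ∣ X ^ N - 1`. Writing `N = 2 ^ a * m` with `m`
odd, Frobenius gives `X ^ N - 1 = (X ^ m - 1) ^ 2 ^ a`, and `X ^ m - 1` is separable, so `f`
divides it at most once. Hence `f ^ ℓ ∣ X ^ N - 1` forces `f ∣ X ^ m - 1`, i.e. `2 ^ k - 1 ≤ m`,
and `ℓ ≤ 2 ^ a`; conversely `(2 ^ k - 1) * 2 ^ ⌈log₂ ℓ⌉` is a period. -/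

section Shift

variable (R : Type*) [CommSemiring R]

def shift : Module.End R (ℕ → R) where
  toFun s i := s (i + 1)
  map_add' _ _ := rfl
  map_smul' _ _ := rfl

variable {R}

lemma shift_pow_apply (n : ℕ) (s : ℕ → R) (i : ℕ) : (shift R ^ n) s i = s (i + n) := by
  induction n generalizing s with
  | zero => rfl
  | succ n ih =>
    rw [pow_succ, Module.End.mul_apply, ih, ← add_assoc]
    rfl

end Shift

lemma polyApp_eq_aeval_shift (f : (ZMod 2)[X]) (s : ℕ → ZMod 2) :
    polyApp f s = aeval (shift (ZMod 2)) f s := by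
  ext i
  show (f.sum fun j c => c * s (i + j)) = _
  rw [aeval_def, eval₂_eq_sum, Polynomial.sum, Polynomial.sum, LinearMap.sum_apply,
    Finset.sum_apply]
  refine Finset.sum_congr rfl fun n _ => ?_
  rw [Algebra.algebraMap_eq_smul_one, smul_mul_assoc, one_mul, LinearMap.smul_apply, Pi.smul_apply,
    shift_pow_apply, smul_eq_mul]

lemma polyApp_mul (g h : (ZMod 2)[X]) (s : ℕ → ZMod 2) :
    polyApp (g * h) s = polyApp g (polyApp h s) := by
  simp only [polyApp_eq_aeval_shift, map_mul, Module.End.mul_apply]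

lemma hasPeriodDvd_iff_polyApp_eq_zero (s : ℕ → ZMod 2) (N : ℕ) :
    HasPeriodDvd s N ↔ polyApp (X ^ N - 1) s = 0 := by
  simp only [polyApp_eq_aeval_shift, map_sub, map_pow, aeval_X, map_one, funext_iff,
    LinearMap.sub_apply, shift_pow_apply, Module.End.one_apply, sub_eq_zero,
    HasPeriodDvd]

lemma hasPeriodDvd_of_dvd {g : (ZMod 2)[X]} {s : ℕ → ZMod 2} (hg : polyApp g s = 0) {N : ℕ}
    (hdvd : g ∣ X ^ N - 1) : HasPeriodDvd s N := by
  obtain ⟨q, hq⟩ := hdvd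
  rw [hasPeriodDvd_iff_polyApp_eq_zero, hq, mul_comm, polyApp_mul, hg, polyApp_eq_aeval_shift,
    map_zero]

lemma IsMinZeroPoly.dvd {g : (ZMod 2)[X]} {s : ℕ → ZMod 2} (hg : IsMinZeroPoly g s)
    {p : (ZMod 2)[X]} (hp : polyApp p s = 0) : g ∣ p := by
  obtain ⟨hg0, hgs, hmin⟩ := hg
  have hrem : polyApp (p % g) s = 0 := by
    rw [EuclideanDomain.mod_eq_sub_mul_div, mul_comm, polyApp_eq_aeval_shift, map_sub, map_mul,
      LinearMap.sub_apply, Module.End.mul_apply, ← polyApp_eq_aeval_shift p,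
      ← polyApp_eq_aeval_shift g, hp, hgs, map_zero, sub_zero]
  by_contra hndvd
  have hrem0 : p % g ≠ 0 := fun h => hndvd (EuclideanDomain.mod_eq_zero.mp h)
  exact (natDegree_lt_natDegree hrem0 (degree_mod_lt p hg0)).not_ge (hmin _ hrem0 hrem)

section CharP

variable {R : Type*} [CommRing R] {p : ℕ} [Fact p.Prime] [CharP R p]

lemma pow_sub_one_pow_char_pow (x : R) (n a : ℕ) : (x ^ n - 1) ^ p ^ a = x ^ (n * p ^ a) - 1 := by
  rw [sub_pow_char_pow, one_pow, pow_mul]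

lemma pow_dvd_X_pow_mul_pow_char_sub_one {f : R[X]} {e : ℕ} (hf : f ∣ X ^ e - 1) {ℓ a : ℕ}
    (hℓ : ℓ ≤ p ^ a) : f ^ ℓ ∣ X ^ (e * p ^ a) - 1 := by
  rw [← pow_sub_one_pow_char_pow]
  exact (pow_dvd_pow f hℓ).trans (pow_dvd_pow_of_dvd hf _)

end CharP

lemma le_of_pow_dvd_pow_of_emultiplicity_le_one {α : Type*} [CommMonoidWithZero α]
    [IsCancelMulZero α] {p q : α} (hp : Prime p) (hq : emultiplicity p q ≤ 1) {ℓ n : ℕ}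
    (h : p ^ ℓ ∣ q ^ n) : ℓ ≤ n := by
  have : (ℓ : ℕ∞) ≤ n := calc
    (ℓ : ℕ∞) ≤ emultiplicity p (q ^ n) := pow_dvd_iff_le_emultiplicity.mp h
    _ = n * emultiplicity p q := emultiplicity_pow hp
    _ ≤ n * 1 := by gcongr
    _ = n := mul_one _
  exact_mod_cast this

lemma emultiplicity_X_pow_sub_one_le_one {K : Type*} [Field K] {n : ℕ} (hn : (n : K) ≠ 0)
    {q : K[X]} (hq : ¬IsUnit q) : emultiplicity q (X ^ n - 1) ≤ 1 := by
  have hsep : (X ^ n - 1 : K[X]).Separable := by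
    simpa using separable_X_pow_sub_C (1 : K) hn one_ne_zero
  exact emultiplicity_le_one_of_separable hq hsep

lemma IsExponent.mul_two_pow_clog_le {f : (ZMod 2)[X]} (hf : Irreducible f) {e : ℕ}
    (he : IsExponent f e) {ℓ : ℕ} (hℓ : 1 ≤ ℓ) {N : ℕ} (hN : 0 < N) (hdvd : f ^ ℓ ∣ X ^ N - 1) :
    e * 2 ^ Nat.clog 2 ℓ ≤ N := by
  obtain ⟨a, m, hm, rfl⟩ := Nat.exists_eq_two_pow_mul_odd hN.ne'
  have hsplit : (X ^ (2 ^ a * m) - 1 : (ZMod 2)[X]) = (X ^ m - 1) ^ 2 ^ a := by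
    rw [pow_sub_one_pow_char_pow, mul_comm]
  rw [hsplit] at hdvd
  have hfm : f ∣ X ^ m - 1 :=
    hf.prime.dvd_of_dvd_pow ((dvd_pow_self f (Nat.one_le_iff_ne_zero.mp hℓ)).trans hdvd)
  have hem : e ≤ m := he.2.2 m hm.pos hfm
  have hℓa : ℓ ≤ 2 ^ a := by
    refine le_of_pow_dvd_pow_of_emultiplicity_le_one hf.prime ?_ hdvd
    refine emultiplicity_X_pow_sub_one_le_one ?_ hf.not_isUnit
    rwa [Ne, CharP.cast_eq_zero_iff (ZMod 2) 2, ← even_iff_two_dvd, Nat.not_even_iff_odd]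
  calc e * 2 ^ Nat.clog 2 ℓ ≤ m * 2 ^ a :=
        Nat.mul_le_mul hem (Nat.pow_le_pow_right two_pos (Nat.clog_le_of_le_pow hℓa))
    _ = 2 ^ a * m := mul_comm _ _

theorem least_period_of_primitive_power_general
    (f : Polynomial (ZMod 2)) (k : ℕ) (hf : IsPrimitivePoly f k)
    (ℓ : ℕ) (hℓ : 1 ≤ ℓ)
    (s : ℕ → ZMod 2) (hmin : IsMinZeroPoly (f ^ ℓ) s) :
    IsLeastPeriod s ((2 ^ k - 1) * 2 ^ (Nat.clog 2 ℓ)) := by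
  obtain ⟨hirr, -, -, hexp⟩ := hf
  refine ⟨Nat.mul_pos hexp.1 (Nat.two_pow_pos _), ?_, fun N hN hper => ?_⟩
  · exact hasPeriodDvd_of_dvd hmin.2.1
      (pow_dvd_X_pow_mul_pow_char_sub_one hexp.2.1 (Nat.le_pow_clog one_lt_two ℓ))
  · exact hexp.mul_two_pow_clog_le hirr hℓ hN
      (hmin.dvd ((hasPeriodDvd_iff_polyApp_eq_zero s N).mp hper))

theorem least_period_of_primitive_power
    (f : Polynomial (ZMod 2)) (k : ℕ) (hf : IsPrimitivePoly f k)
    (ℓ : ℕ) (hℓ : 1 ≤ ℓ)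
    (s : ℕ → ZMod 2) (hs : s ≠ 0) (hmin : IsMinZeroPoly (f ^ ℓ) s) :
    IsLeastPeriod s ((2 ^ k - 1) * 2 ^ (Nat.clog 2 ℓ)) :=
  least_period_of_primitive_power_general f k hf ℓ hℓ s hmin
end

section
/- Let m ≥ 1 and let r be a binary sequence with period dividing 3·2^m such that r(i) + r(i + 2^m) + r(i + 2·2^m) = 0 for all i ≥ 0 (equivalently, r consists of three consecutive blocks X+Y, Y+Z, Z+X of length 2^m). Then the sequence r' := (E² + E + 1)^{2^{m−1}} r has period dividing 3·2^{m−1} and satisfies r'(i) + r'(i + 2^{m−1}) + r'(i + 2·2^{m−1}) = 0 for all i ≥ 0. -/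
open Polynomial

lemma polyApp_add (f g : Polynomial (ZMod 2)) (s : ℕ → ZMod 2) (i : ℕ) :
    polyApp (f + g) s i = polyApp f s i + polyApp g s i := by
  unfold polyApp
  rw [Polynomial.sum_add_index] <;> intros <;> simp [add_mul]

lemma polyApp_X_pow (a : ℕ) (s : ℕ → ZMod 2) (i : ℕ) :
    polyApp (X ^ a) s i = s (i + a) := by
  unfold polyApp
  rw [X_pow_eq_monomial, Polynomial.sum_monomial_index] <;> simp

lemma polyApp_one (s : ℕ → ZMod 2) (i : ℕ) : polyApp 1 s i = s i := by
  unfold polyApp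
  rw [← Polynomial.C_1, Polynomial.sum_C_index] <;> simp

theorem reduction_step_period_three
    (m : ℕ) (hm : 1 ≤ m)
    (r : ℕ → ZMod 2) (hper : ∀ i, r (i + 3 * 2 ^ m) = r i)
    (hsum : ∀ i, r i + r (i + 2 ^ m) + r (i + 2 * 2 ^ m) = 0)
    (r' : ℕ → ZMod 2)
    (hr' : r' = polyApp ((X ^ 2 + X + 1) ^ (2 ^ (m - 1))) r) :
    (∀ i, r' (i + 3 * 2 ^ (m - 1)) = r' i) ∧
    (∀ i, r' i + r' (i + 2 ^ (m - 1)) + r' (i + 2 * 2 ^ (m - 1)) = 0) := by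
  set n := 2 ^ (m - 1) with hn
  have hnm : 2 ^ m = 2 * n := by
    rw [hn, ← pow_succ', Nat.sub_add_cancel hm]
  -- Frobenius
  have hpoly : ((X : Polynomial (ZMod 2)) ^ 2 + X + 1) ^ n = X ^ (2 * n) + X ^ n + 1 := by
    rw [hn, add_pow_char_pow, add_pow_char_pow, one_pow, ← pow_mul]
  have hr'' : ∀ i, r' i = r (i + 2 * n) + r (i + n) + r i := by
    intro i
    rw [hr', hpoly, polyApp_add, polyApp_add, polyApp_X_pow, polyApp_X_pow, polyApp_one]
  have hs : ∀ i, r i + r (i + 2 * n) + r (i + 4 * n) = 0 := by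
    intro i
    have := hsum i
    rwa [hnm, show 2 * (2 * n) = 4 * n by ring] at this
  have two : (2 : ZMod 2) = 0 := rfl
  constructor
  · intro i
    rw [hr'' (i + 3 * n), hr'' i]
    simp only [show i + 3 * n + 2 * n = i + 5 * n by ring, show i + 3 * n + n = i + 4 * n by ring]
    have h1 := hs i
    have h2 := hs (i + n)
    simp only [show i + n + 2 * n = i + 3 * n by ring, show i + n + 4 * n = i + 5 * n by ring] at h2
    linear_combination h1 + h2 - (r i + r (i + n) + r (i + 2 * n)) * two
  · intro i
    rw [hr'' i, hr'' (i + n), hr'' (i + 2 * n)]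
    simp only [show i + n + 2 * n = i + 3 * n by ring, show i + n + n = i + 2 * n by ring,
      show i + 2 * n + 2 * n = i + 4 * n by ring, show i + 2 * n + n = i + 3 * n by ring]
    linear_combination hs i + (r (i + n) + r (i + 2 * n) + r (i + 3 * n)) * two
end
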